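/- Let K be a field with algebraic closure K̄, and let f ∈ K[x] be a polynomial with deg f ≥ 2 and f′ ≠ 0; let d be the greatest proper divisor of deg f, and let D(t) = Res_X(f(X) − t, f′(X)) ∈ K[t] (a nonzero polynomial). If there exist at least d distinct elements b ∈ K̄ whose multiplicity as a root of D (regarded in K̄[t]) equals 1, then f is prime over K: there do not exist g, h ∈ K[x] with deg g ≥ 2 and deg h ≥ 2 such that f = g ∘ h. -/

import Mathlib

open Polynomial

/-- The Sylvester matrix of two polynomials `p, q ∈ R[X]` (with respect to their
`natDegree`s): the first `deg q` rows hold the coefficients of `p`, shifted, and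
the last `deg p` rows hold the coefficients of `q`, shifted. -/
noncomputable def sylvesterMatrix {R : Type*} [CommRing R] (p q : Polynomial R) :
    Matrix (Fin (q.natDegree + p.natDegree)) (Fin (q.natDegree + p.natDegree)) R :=
  Matrix.of fun i j =>
    if (i : ℕ) < q.natDegree then
      if (j : ℕ) ≤ p.natDegree + i then p.coeff (p.natDegree + i - j) else 0
    else
      if (j : ℕ) ≤ (i : ℕ) then q.coeff ((i : ℕ) - j) else 0

/-- The resultant `Res_X(p, q)` of two polynomials, as the determinant of their
Sylvester matrix. -/
noncomputable def resultant {R : Type*} [CommRing R] (p q : Polynomial R) : R :=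
  (sylvesterMatrix p q).det

/-- For `f ∈ K[x]` and an auxiliary variable `t`, the polynomial `f(X) − t`
regarded as a polynomial in `X` with coefficients in `K[t]`. -/
noncomputable def polySubT {K : Type*} [Field K] (f : Polynomial K) :
    Polynomial (Polynomial K) :=
  f.map Polynomial.C - Polynomial.C Polynomial.X

/-! Over `K̄`, `Res_X(f(X) − t, f'(X))` is a nonzero constant times `∏ (t − f(γ))`, the product
running over the roots `γ` of `f'` with multiplicity, so the multiplicity of `b` as a root of `D`
is the number of critical points of `f` lying over `b`. If `f = g ∘ h`, then `f' = h' · (g' ∘ h)`,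
and a critical point `γ` coming from `g' ∘ h` brings along all `deg h ≥ 2` roots of `h − h(γ)`,
which are critical points over the same value. Hence every simple critical value is `f(γ)` for a
root `γ` of `h'`, and there are fewer than `deg h ≤ d` of them. -/

theorem sylvesterMatrix_eq_submatrix {R : Type*} [CommRing R] (p q : R[X]) :
    sylvesterMatrix p q =
      (sylvester p q p.natDegree q.natDegree).transpose.submatrix
        ((finCongr (add_comm _ _)).trans Fin.revPerm)
        ((finCongr (add_comm _ _)).trans Fin.revPerm) := by
  ext ⟨i, hi⟩ ⟨j, hj⟩
  simp only [sylvesterMatrix, sylvester, Matrix.of_apply, Matrix.submatrix_apply,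
    Matrix.transpose_apply, Fin.addCases, Equiv.trans_apply, finCongr_apply, Fin.revPerm_apply,
    Fin.val_rev, Fin.val_cast, Fin.val_castLT, Fin.val_subNat, Set.mem_Icc, eq_rec_constant]
  split_ifs <;>
    first
    | omega
    | rfl
    | (congr 1; omega)
    | (apply coeff_eq_zero_of_natDegree_lt; omega)

theorem resultant_eq_polynomial_resultant {R : Type*} [CommRing R] (p q : R[X]) :
    _root_.resultant p q = Polynomial.resultant p q := by
  rw [_root_.resultant, sylvesterMatrix_eq_submatrix, Matrix.det_submatrix_equiv_self,
    Matrix.det_transpose, Polynomial.resultant]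

theorem natDegree_polySubT {K : Type*} [Field K] (f : K[X]) :
    (polySubT f).natDegree = f.natDegree := by
  rw [polySubT, natDegree_sub_C, natDegree_map]

theorem map_polySubT {K L : Type*} [Field K] [Field L] (φ : K →+* L) (f : K[X]) :
    (polySubT f).map (mapRingHom φ) = polySubT (f.map φ) := by
  simp [polySubT, Polynomial.map_map, mapRingHom_comp_C]

theorem map_resultant_polySubT {K L : Type*} [Field K] [Field L] (φ : K →+* L) (f g : K[X]) :
    (Polynomial.resultant (polySubT f) (g.map C)).map φ =
      Polynomial.resultant (polySubT (f.map φ)) ((g.map φ).map C) := by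
  rw [← coe_mapRingHom, ← resultant_map_map, map_polySubT, Polynomial.map_map, mapRingHom_comp_C,
    ← Polynomial.map_map]
  simp [natDegree_polySubT]

theorem eval_C_polySubT {K : Type*} [Field K] (f : K[X]) (γ : K) :
    (polySubT f).eval (C γ) = C (f.eval γ) - X := by
  rw [polySubT, eval_sub, eval_map, eval₂_at_apply, eval_C]

theorem resultant_polySubT_eq {L : Type*} [Field L] (f g : L[X]) (hg : g.Splits) :
    Polynomial.resultant (polySubT f) (g.map C) =
      C ((-1) ^ (f.natDegree * g.natDegree + g.natDegree) * g.leadingCoeff ^ f.natDegree) *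
        ((g.roots.map f.eval).map (X - C ·)).prod := by
  rw [resultant_comm, resultant_eq_prod_eval _ _ _ le_rfl (hg.map C),
    hg.roots_map, leadingCoeff_map, natDegree_polySubT, natDegree_map, Multiset.map_map]
  simp only [Function.comp_def, eval_C_polySubT]
  have hneg : g.roots.map (fun x => C (f.eval x) - X) =
      ((g.roots.map f.eval).map (X - C ·)).map Neg.neg := by
    simp only [Multiset.map_map, Function.comp_def, neg_sub]
  rw [hneg, Multiset.prod_map_neg, Multiset.card_map, Multiset.card_map,
    ← hg.natDegree_eq_card_roots]
  simp only [map_mul, map_pow, map_neg, map_one, pow_add]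
  ring

theorem rootMultiplicity_resultant_polySubT {L : Type*} [Field L] [DecidableEq L] (f : L[X])
    {g : L[X]} (hg0 : g ≠ 0) (hg : g.Splits) (b : L) :
    (Polynomial.resultant (polySubT f) (g.map C)).rootMultiplicity b =
      (g.roots.map f.eval).count b := by
  have hc : (-1) ^ (f.natDegree * g.natDegree + g.natDegree) * g.leadingCoeff ^ f.natDegree ≠ 0 :=
    mul_ne_zero (pow_ne_zero _ (neg_ne_zero.mpr one_ne_zero))
      (pow_ne_zero _ (leadingCoeff_ne_zero.mpr hg0))
  rw [← count_roots, resultant_polySubT_eq f g hg, roots_C_mul _ hc, roots_multiset_prod_X_sub_C]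

theorem rootMultiplicity_map_resultant_polySubT_derivative {K L : Type*} [Field K] [Field L]
    [IsAlgClosed L] [DecidableEq L] (φ : K →+* L) {f : K[X]} (hf' : derivative f ≠ 0) (b : L) :
    ((Polynomial.resultant (polySubT f) ((derivative f).map C)).map φ).rootMultiplicity b =
      ((derivative (f.map φ)).roots.map (f.map φ).eval).count b := by
  rw [map_resultant_polySubT, ← derivative_map,
    rootMultiplicity_resultant_polySubT _ _ (IsAlgClosed.splits _)]
  rwa [derivative_map, Polynomial.map_ne_zero_iff φ.injective]

theorem natDegree_le_count_map_roots {L : Type*} [Field L] [IsAlgClosed L] [DecidableEq L]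
    (g : L[X]) {h q : L[X]} (hq : q ≠ 0) {a : L} (hdvd : h - C a ∣ q) :
    h.natDegree ≤ (q.roots.map (g.comp h).eval).count (g.eval a) := by
  have hfiber : ∀ x ∈ (h - C a).roots.map (g.comp h).eval, g.eval a = x := by
    simp only [Multiset.mem_map, mem_roots', IsRoot, eval_sub, eval_C, sub_eq_zero]
    rintro _ ⟨γ, ⟨-, hγ⟩, rfl⟩
    rw [eval_comp, hγ]
  calc h.natDegree = ((h - C a).roots.map (g.comp h).eval).count (g.eval a) := by
        rw [Multiset.count_eq_card.mpr hfiber, Multiset.card_map,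
          IsAlgClosed.card_roots_eq_natDegree, natDegree_sub_C]
    _ ≤ (q.roots.map (g.comp h).eval).count (g.eval a) :=
        Multiset.count_le_of_le _ (Multiset.map_le_map (roots.le_of_dvd hq hdvd))

theorem mem_map_roots_derivative_of_count_eq_one {L : Type*} [Field L] [IsAlgClosed L]
    [DecidableEq L] {g h : L[X]} (hh : 2 ≤ h.natDegree) (hf' : derivative (g.comp h) ≠ 0) {b : L}
    (hb : ((derivative (g.comp h)).roots.map (g.comp h).eval).count b = 1) :
    b ∈ (derivative h).roots.map (g.comp h).eval := by
  rw [derivative_comp] at hf' hb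
  rw [roots_mul hf', Multiset.map_add, Multiset.count_add] at hb
  have houter : (((derivative g).comp h).roots.map (g.comp h).eval).count b = 0 := by
    by_contra hne
    obtain ⟨γ, hγ, rfl⟩ := Multiset.mem_map.mp (Multiset.count_ne_zero.mp hne)
    have hdvd : h - C (h.eval γ) ∣ (derivative g).comp h := by
      obtain ⟨u, hu⟩ := dvd_iff_isRoot.mpr (by
        simpa [eval_comp] using (mem_roots (right_ne_zero_of_mul hf')).mp hγ)
      exact ⟨u.comp h, by rw [hu, mul_comp, sub_comp, X_comp, C_comp]⟩
    have hcount := natDegree_le_count_map_roots g (right_ne_zero_of_mul hf') hdvd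
    rw [← eval_comp] at hcount
    omega
  exact Multiset.count_pos.mp (by omega)

theorem card_lt_natDegree_of_forall_mem_map_roots_derivative {R α : Type*} [CommRing R]
    [IsDomain R] [DecidableEq α] {h : R[X]} (hh : h.natDegree ≠ 0) {F : R → α} {s : Finset α}
    (hs : ∀ b ∈ s, b ∈ (derivative h).roots.map F) :
    s.card < h.natDegree :=
  calc s.card ≤ ((derivative h).roots.map F).toFinset.card :=
        Finset.card_le_card fun b hb => Multiset.mem_toFinset.mpr (hs b hb)
    _ ≤ (derivative h).roots.card := (Multiset.toFinset_card_le _).trans (Multiset.card_map _ _).le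
    _ ≤ (derivative h).natDegree := card_roots' _
    _ < h.natDegree := natDegree_derivative_lt hh

theorem stmt_12_general {K Kbar : Type*} [Field K] [Field Kbar] [Algebra K Kbar]
    [IsAlgClosure K Kbar] (f : Polynomial K)
    (hf' : derivative f ≠ 0)
    (d : ℕ)
    (hdmax : ∀ e : ℕ, e ∣ f.natDegree → e < f.natDegree → e ≤ d)
    (S : Finset Kbar) (hS : d ≤ S.card)
    (hsimple : ∀ b ∈ S,
      ((_root_.resultant (polySubT f) ((derivative f).map Polynomial.C)).map
          (algebraMap K Kbar)).rootMultiplicity b = 1) :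
    ¬ ∃ g h : Polynomial K, 2 ≤ g.natDegree ∧ 2 ≤ h.natDegree ∧ f = g.comp h := by
  classical
  rintro ⟨g, h, hg2, hh2, rfl⟩
  have : IsAlgClosed Kbar := IsAlgClosure.isAlgClosed K
  set φ := algebraMap K Kbar
  have hcrit : ∀ b ∈ S, b ∈ (derivative (h.map φ)).roots.map ((g.map φ).comp (h.map φ)).eval := by
    intro b hb
    have hb1 := hsimple b hb
    rw [resultant_eq_polynomial_resultant,
      rootMultiplicity_map_resultant_polySubT_derivative φ hf', Polynomial.map_comp] at hb1
    refine mem_map_roots_derivative_of_count_eq_one (by rwa [natDegree_map]) ?_ hb1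
    rwa [← Polynomial.map_comp, derivative_map, Polynomial.map_ne_zero_iff φ.injective]
  have hcard := card_lt_natDegree_of_forall_mem_map_roots_derivative
    (by rw [natDegree_map]; omega) hcrit
  have hdeg : (g.comp h).natDegree = g.natDegree * h.natDegree := natDegree_comp
  have hhd := hdmax h.natDegree (hdeg ▸ dvd_mul_left _ _) (by rw [hdeg]; nlinarith)
  rw [natDegree_map] at hcard
  omega

/-- Let `K` be a field with algebraic closure `K̄`, and `f ∈ K[x]`
with `deg f ≥ 2` and `f' ≠ 0`; let `d` be the greatest proper divisor of `deg f` and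
`D(t) = Res_X(f(X) − t, f'(X)) ∈ K[t]`.  If at least `d` distinct elements `b ∈ K̄`
have multiplicity exactly `1` as roots of `D`, then `f` is prime over `K`: there do
not exist `g, h ∈ K[x]` with `deg g ≥ 2`, `deg h ≥ 2` and `f = g ∘ h`. -/
theorem stmt_12 {K Kbar : Type*} [Field K] [Field Kbar] [Algebra K Kbar]
    [IsAlgClosure K Kbar] (f : Polynomial K) (hdeg : 2 ≤ f.natDegree)
    (hf' : derivative f ≠ 0)
    (d : ℕ) (hd : d ∣ f.natDegree) (hdlt : d < f.natDegree)
    (hdmax : ∀ e : ℕ, e ∣ f.natDegree → e < f.natDegree → e ≤ d)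
    (S : Finset Kbar) (hS : d ≤ S.card)
    (hsimple : ∀ b ∈ S,
      ((_root_.resultant (polySubT f) ((derivative f).map Polynomial.C)).map
          (algebraMap K Kbar)).rootMultiplicity b = 1) :
    ¬ ∃ g h : Polynomial K, 2 ≤ g.natDegree ∧ 2 ≤ h.natDegree ∧ f = g.comp h :=
  stmt_12_general f hf' d hdmax S hS hsimple
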